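/- (Open-loop safety under total packet loss.) Under the setting of the multi-horizon MPC for tracking, suppose the problem P(x₀) is feasible, with feasible trajectories x_(0),…,x_(N), inputs u_(0),…,u_(N−1), and steady pair (x̄, ū) satisfying (x_(h₁), x̄, ū) ∈ O_∞^MH. If the plant applies the first h₁ planned inputs u_(0),…,u_(h₁−1) and thereafter applies the auxiliary law u_t = K(x̄ − x_t) + ū for all t ≥ h₁, then the resulting closed-loop trajectory of x_{t+1} = A x_t + B u_t satisfies x_t ∈ X and u_t ∈ U for every t ≥ 0. -/

import Mathlib

open Matrix

/-- Coarse multi-horizon input matrix `B_i = ∑_{j=0}^{i-1} A^j B`. -/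
noncomputable def Bcoarse {n m : ℕ} (A : Matrix (Fin n) (Fin n) ℝ)
    (B : Matrix (Fin n) (Fin m) ℝ) (i : ℕ) : Matrix (Fin n) (Fin m) ℝ :=
  ∑ j ∈ Finset.range i, A ^ j * B

/-- Feasibility of the coarse tail problem along a list of granularities `steps`: from the state
`x` there exist inputs in `U` such that all successor states generated by the coarse dynamics
`x ↦ A^i x + B_i u` lie in `X`. -/
def tailFeasible {n m : ℕ} (A : Matrix (Fin n) (Fin n) ℝ) (B : Matrix (Fin n) (Fin m) ℝ)
    (X : Set (Fin n → ℝ)) (U : Set (Fin m → ℝ)) : List ℕ → (Fin n → ℝ) → Prop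
  | [], _ => True
  | i :: rest, x => ∃ u ∈ U,
      (A ^ i).mulVec x + (Bcoarse A B i).mulVec u ∈ X ∧
      tailFeasible A B X U rest ((A ^ i).mulVec x + (Bcoarse A B i).mulVec u)

/-- The flattened list of granularities of the tail sub-intervals: given the horizon tail
`hs = [h₂, …, h_H]`, the `j`-th entry of `hs` (granularity `j + 2`) contributes `h_{j+2}` steps. -/
def tailSteps (hs : List ℕ) : List ℕ :=
  hs.zipIdx.flatMap fun p => List.replicate p.1 (p.2 + 2)

/-- The set `X₀⁽²⁾` of states in `X` from which the coarse tail problem (sub-intervals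
`i = 2, …, H`) admits a feasible input sequence. -/
def X02 {n m : ℕ} (A : Matrix (Fin n) (Fin n) ℝ) (B : Matrix (Fin n) (Fin m) ℝ)
    (X : Set (Fin n → ℝ)) (U : Set (Fin m → ℝ)) (hs : List ℕ) : Set (Fin n → ℝ) :=
  {x | x ∈ X ∧ tailFeasible A B X U (tailSteps hs) x}

/-- The extended block matrix `A_e = [[A - BK, BK, B], [0, I_n, 0], [0, 0, I_m]]`. -/
noncomputable def Ae {n m : ℕ} (A : Matrix (Fin n) (Fin n) ℝ) (B : Matrix (Fin n) (Fin m) ℝ)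
    (K : Matrix (Fin m) (Fin n) ℝ) :
    Matrix ((Fin n ⊕ Fin n) ⊕ Fin m) ((Fin n ⊕ Fin n) ⊕ Fin m) ℝ :=
  Matrix.fromBlocks
    (Matrix.fromBlocks (A - B * K) (B * K) 0 1)
    (Matrix.fromRows B 0)
    0 1

/-- The extended state vector `w = (x, x̄, ū) ∈ ℝ^{2n+m}`. -/
def toVec {n m : ℕ} (x xb : Fin n → ℝ) (ub : Fin m → ℝ) : ((Fin n ⊕ Fin n) ⊕ Fin m) → ℝ :=
  Sum.elim (Sum.elim x xb) ub

/-- Projection onto the state component `x` of the extended state. -/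
def projX {n m : ℕ} (w : ((Fin n ⊕ Fin n) ⊕ Fin m) → ℝ) : Fin n → ℝ :=
  fun i => w (Sum.inl (Sum.inl i))

/-- Projection onto the steady-state component `x̄` of the extended state. -/
def projXbar {n m : ℕ} (w : ((Fin n ⊕ Fin n) ⊕ Fin m) → ℝ) : Fin n → ℝ :=
  fun i => w (Sum.inl (Sum.inr i))

/-- Projection onto the steady-input component `ū` of the extended state. -/
def projUbar {n m : ℕ} (w : ((Fin n ⊕ Fin n) ⊕ Fin m) → ℝ) : Fin m → ℝ :=
  fun i => w (Sum.inr i)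

/-- The multi-horizon constraint set
`W_MH = { (x, x̄, ū) : x ∈ X₀⁽²⁾, K (x̄ - x) + ū ∈ U }`. -/
def WMH {n m : ℕ} (A : Matrix (Fin n) (Fin n) ℝ) (B : Matrix (Fin n) (Fin m) ℝ)
    (K : Matrix (Fin m) (Fin n) ℝ) (X : Set (Fin n → ℝ)) (U : Set (Fin m → ℝ))
    (hs : List ℕ) : Set (((Fin n ⊕ Fin n) ⊕ Fin m) → ℝ) :=
  {w | projX w ∈ X02 A B X U hs ∧ K.mulVec (projXbar w - projX w) + projUbar w ∈ U}

/-- The multi-horizon maximal output admissible set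
`O_∞^MH = { w : A_e^k w ∈ W_MH for all k ≥ 0 }`. -/
def OinfMH {n m : ℕ} (A : Matrix (Fin n) (Fin n) ℝ) (B : Matrix (Fin n) (Fin m) ℝ)
    (K : Matrix (Fin m) (Fin n) ℝ) (X : Set (Fin n → ℝ)) (U : Set (Fin m → ℝ))
    (hs : List ℕ) : Set (((Fin n ⊕ Fin n) ⊕ Fin m) → ℝ) :=
  {w | ∀ k : ℕ, ((Ae A B K) ^ k).mulVec w ∈ WMH A B K X U hs}

/-- The flattened list of granularities of the whole horizon division `H = [h₁, h₂, …, h_H]`: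
`h₁` steps of granularity `1` followed by the coarse tail steps. Its length is the total
horizon length `N = ∑ h_i`. -/
def fullSteps (h1 : ℕ) (hs : List ℕ) : List ℕ :=
  List.replicate h1 1 ++ tailSteps hs

/-- `FeasibleWit A B K X U h1 hs x xs us xb ub` states that the sequences `xs`, `us` and the
steady pair `(xb, ub)` witness feasibility of the multi-horizon tracking MPC problem at state
`x`. -/
def FeasibleWit {n m : ℕ} (A : Matrix (Fin n) (Fin n) ℝ) (B : Matrix (Fin n) (Fin m) ℝ)
    (K : Matrix (Fin m) (Fin n) ℝ) (X : Set (Fin n → ℝ)) (U : Set (Fin m → ℝ))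
    (h1 : ℕ) (hs : List ℕ) (x : Fin n → ℝ)
    (xs : ℕ → Fin n → ℝ) (us : ℕ → Fin m → ℝ) (xb : Fin n → ℝ) (ub : Fin m → ℝ) : Prop :=
  xs 0 = x ∧
  (∀ k < (fullSteps h1 hs).length,
    xs (k + 1) = (A ^ ((fullSteps h1 hs).getD k 1)).mulVec (xs k) +
      (Bcoarse A B ((fullSteps h1 hs).getD k 1)).mulVec (us k)) ∧
  (∀ k < (fullSteps h1 hs).length, xs k ∈ X ∧ us k ∈ U) ∧
  toVec (xs h1) xb ub ∈ OinfMH A B K X U hs ∧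
  (A - 1).mulVec xb + B.mulVec ub = 0

/-! During the first `h₁` steps the plant replays the fine first sub-interval of the plan
(`A₁ = A`, `B₁ = B`), so it follows the planned trajectory and inherits its constraints. From
`h₁` on, the auxiliary law turns the closed loop into the autonomous extended system
`w ↦ A_e w` on `w = (x, x̄, ū)`, started at `(x_(h₁), x̄, ū) ∈ O_∞^MH`; hence every later
extended state lies in `W_MH`, whose defining conditions contain the state and input
constraints. -/

section ExtendedSystem

variable {n m : ℕ} (A : Matrix (Fin n) (Fin n) ℝ) (B : Matrix (Fin n) (Fin m) ℝ)
  (K : Matrix (Fin m) (Fin n) ℝ)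

lemma Bcoarse_one : Bcoarse A B 1 = B := by
  simp [Bcoarse]

lemma Ae_mulVec_toVec (y xb : Fin n → ℝ) (ub : Fin m → ℝ) :
    (Ae A B K) *ᵥ toVec y xb ub = toVec (A *ᵥ y + B *ᵥ (K *ᵥ (xb - y) + ub)) xb ub := by
  ext ((i | i) | i)
  · simp only [Ae, toVec, fromBlocks_mulVec, Sum.elim_comp_inl, Sum.elim_comp_inr, sub_mulVec,
      zero_mulVec, one_mulVec, zero_add, fromRows_mulVec, Sum.elim_inl, Pi.add_apply,
      Pi.sub_apply, mulVec_sub, mulVec_add, mulVec_mulVec]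
    ring
  all_goals simp [Ae, toVec, fromBlocks_mulVec]

lemma Ae_pow_mulVec_toVec {y : ℕ → Fin n → ℝ} {xb : Fin n → ℝ} {ub : Fin m → ℝ}
    (hy : ∀ k, y (k + 1) = A *ᵥ y k + B *ᵥ (K *ᵥ (xb - y k) + ub)) (k : ℕ) :
    (Ae A B K ^ k) *ᵥ toVec (y 0) xb ub = toVec (y k) xb ub := by
  induction k with
  | zero => simp
  | succ k ih => rw [pow_succ', ← mulVec_mulVec, ih, Ae_mulVec_toVec, hy]

variable {A B K} {X : Set (Fin n → ℝ)} {U : Set (Fin m → ℝ)} {hs : List ℕ}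

lemma toVec_mem_WMH {y xb : Fin n → ℝ} {ub : Fin m → ℝ}
    (hw : toVec y xb ub ∈ WMH A B K X U hs) : y ∈ X ∧ K *ᵥ (xb - y) + ub ∈ U :=
  ⟨hw.1.1, hw.2⟩

end ExtendedSystem

lemma le_length_fullSteps (h1 : ℕ) (hs : List ℕ) : h1 ≤ (fullSteps h1 hs).length := by
  simp [fullSteps]

lemma fullSteps_getD_of_lt {h1 t : ℕ} (hs : List ℕ) (ht : t < h1) :
    (fullSteps h1 hs).getD t 1 = 1 := by
  rw [fullSteps, List.getD_append _ _ _ _ (by simpa using ht)]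
  simp [List.getD_eq_getElem?_getD, ht]

section Feasibility

variable {n m : ℕ} {A : Matrix (Fin n) (Fin n) ℝ} {B : Matrix (Fin n) (Fin m) ℝ}
  {K : Matrix (Fin m) (Fin n) ℝ} {X : Set (Fin n → ℝ)} {U : Set (Fin m → ℝ)} {h1 : ℕ}
  {hs : List ℕ} {x₀ xb : Fin n → ℝ} {ub : Fin m → ℝ} {xs : ℕ → Fin n → ℝ} {us : ℕ → Fin m → ℝ}

lemma FeasibleWit.planned_step (hfeas : FeasibleWit A B K X U h1 hs x₀ xs us xb ub)
    {t : ℕ} (ht : t < h1) : xs (t + 1) = A *ᵥ xs t + B *ᵥ us t := by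
  rw [hfeas.2.1 t (ht.trans_le (le_length_fullSteps h1 hs)),
    fullSteps_getD_of_lt hs ht, pow_one, Bcoarse_one]

lemma FeasibleWit.planned_mem (hfeas : FeasibleWit A B K X U h1 hs x₀ xs us xb ub)
    {t : ℕ} (ht : t < h1) : xs t ∈ X ∧ us t ∈ U :=
  hfeas.2.2.1 t (ht.trans_le (le_length_fullSteps h1 hs))

lemma FeasibleWit.eq_planned_of_le (hfeas : FeasibleWit A B K X U h1 hs x₀ xs us xb ub)
    {x : ℕ → Fin n → ℝ} (hx0 : x 0 = x₀)
    (hdyn : ∀ t < h1, x (t + 1) = A *ᵥ x t + B *ᵥ us t) :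
    ∀ t ≤ h1, x t = xs t
  | 0, _ => hx0.trans hfeas.1.symm
  | t + 1, ht => by
    rw [hdyn t ht, hfeas.planned_step ht, hfeas.eq_planned_of_le hx0 hdyn t (Nat.le_of_succ_le ht)]

end Feasibility

theorem open_loop_safety_general
    {n m : ℕ} (A : Matrix (Fin n) (Fin n) ℝ) (B : Matrix (Fin n) (Fin m) ℝ)
    (K : Matrix (Fin m) (Fin n) ℝ) (X : Set (Fin n → ℝ)) (U : Set (Fin m → ℝ))
    (h1 : ℕ) (hs : List ℕ)
    (x₀ : Fin n → ℝ) (xs : ℕ → Fin n → ℝ) (us : ℕ → Fin m → ℝ)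
    (xb : Fin n → ℝ) (ub : Fin m → ℝ)
    (hfeas : FeasibleWit A B K X U h1 hs x₀ xs us xb ub)
    (x : ℕ → Fin n → ℝ) (hx0 : x 0 = x₀)
    (hdyn : ∀ t, x (t + 1) = A.mulVec (x t) +
      B.mulVec (if t < h1 then us t else K.mulVec (xb - x t) + ub)) :
    ∀ t, x t ∈ X ∧ (if t < h1 then us t else K.mulVec (xb - x t) + ub) ∈ U := by
  have hplan : ∀ t ≤ h1, x t = xs t :=
    hfeas.eq_planned_of_le hx0 fun t ht => by simpa [ht] using hdyn t
  have hext : ∀ k, (Ae A B K ^ k) *ᵥ toVec (xs h1) xb ub = toVec (x (h1 + k)) xb ub := by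
    rw [← hplan h1 le_rfl]
    exact Ae_pow_mulVec_toVec A B K (y := fun k => x (h1 + k)) fun k => by
      simpa [← add_assoc] using hdyn (h1 + k)
  intro t
  by_cases ht : t < h1
  · rw [if_pos ht, hplan t ht.le]
    exact hfeas.planned_mem ht
  · obtain ⟨k, rfl⟩ := Nat.exists_eq_add_of_le (not_lt.mp ht)
    rw [if_neg ht]
    exact toVec_mem_WMH (hext k ▸ hfeas.2.2.2.1 k)

/-- open-loop safety under total packet loss. If the multi-horizon MPC problem
at `x₀` is feasible, with feasible trajectory `xs`, inputs `us` and steady pair `(x̄, ū)`, and the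
plant applies the first `h₁` planned inputs and thereafter the auxiliary law
`u_t = K (x̄ - x_t) + ū`, then the closed-loop trajectory of `x_{t+1} = A x_t + B u_t` satisfies
`x_t ∈ X` and `u_t ∈ U` for every `t ≥ 0`. -/
theorem open_loop_safety
    {n m : ℕ} (A : Matrix (Fin n) (Fin n) ℝ) (B : Matrix (Fin n) (Fin m) ℝ)
    (K : Matrix (Fin m) (Fin n) ℝ) (X : Set (Fin n → ℝ)) (U : Set (Fin m → ℝ))
    (h1 : ℕ) (hs : List ℕ) (hh1 : 1 ≤ h1)
    (x₀ : Fin n → ℝ) (xs : ℕ → Fin n → ℝ) (us : ℕ → Fin m → ℝ)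
    (xb : Fin n → ℝ) (ub : Fin m → ℝ)
    (hfeas : FeasibleWit A B K X U h1 hs x₀ xs us xb ub)
    (x : ℕ → Fin n → ℝ) (hx0 : x 0 = x₀)
    (hdyn : ∀ t, x (t + 1) = A.mulVec (x t) +
      B.mulVec (if t < h1 then us t else K.mulVec (xb - x t) + ub)) :
    ∀ t, x t ∈ X ∧ (if t < h1 then us t else K.mulVec (xb - x t) + ub) ∈ U :=
  open_loop_safety_general A B K X U h1 hs x₀ xs us xb ub hfeas x hx0 hdyn
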